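/- Let f : ℝ^d → ℝ, n ≥ 1, and define g : (ℝ^d)^n → ℝ by g(x₁,…,x_n) = f( (x₁ + ⋯ + x_n)/√n ). Then for all (x₁,…,x_n), Hg(x₁,…,x_n) ≥ Hf( (x₁ + ⋯ + x_n)/√n ). Moreover, if f is even and belongs to F(C,1), then g is even and belongs to F_n(C, 1/√n). -/

import Mathlib

open MeasureTheory Real

/-- The quadratic infimum convolution `Hf(x) = inf_y ( f(x+y) + |y|²/2 )`. -/
noncomputable def Hconv {E : Type*} [NormedAddCommGroup E] (f : E → ℝ) (x : E) : ℝ :=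
  ⨅ y : E, (f (x + y) + ‖y‖ ^ 2 / 2)

/-- The quadratic infimum convolution on `(ℝ^d)^n ≅ ℝ^{nd}`:
`Hg(z) = inf_w ( g(z+w) + ½|w|² )` with the Euclidean norm `|w|² = ∑ |wᵢ|²`. -/
noncomputable def Hn {d n : ℕ} (g : (Fin n → EuclideanSpace ℝ (Fin d)) → ℝ)
    (x : Fin n → EuclideanSpace ℝ (Fin d)) : ℝ :=
  ⨅ w : Fin n → EuclideanSpace ℝ (Fin d), (g (x + w) + (∑ i, ‖w i‖ ^ 2) / 2)

/-- The class `F(C,ε)`: functions that are `Cε`-Lipschitz and satisfy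
`f(x+h) + f(x-h) - 2f(x) ≤ Cε²|h|²` for all `x, h`. -/
def memF {E : Type*} [NormedAddCommGroup E] (C ε : ℝ) (f : E → ℝ) : Prop :=
  LipschitzWith (C * ε).toNNReal f ∧
    ∀ x h : E, f (x + h) + f (x - h) - 2 * f x ≤ C * ε ^ 2 * ‖h‖ ^ 2

/-- The class `F_n(C,ε)` of functions on `(ℝ^d)^n`: functions belonging to `F(C,ε)`
with respect to each `ℝ^d`-coordinate block separately. -/
def memFn {d n : ℕ} (C ε : ℝ) (f : (Fin n → EuclideanSpace ℝ (Fin d)) → ℝ) : Prop :=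
  ∀ (i : Fin n) (x : Fin n → EuclideanSpace ℝ (Fin d)),
    memF C ε fun y => f (Function.update x i y)

/-!
The map `A(x₁,…,x_n) = (x₁+⋯+x_n)/√n` is a contraction for the Euclidean norm on `(ℝ^d)^n`
(Cauchy–Schwarz), and the diagonal `y ↦ (y/√n,…,y/√n)` is a right inverse of `A` preserving
norms. Hence every value of the infimum defining `Hf(Ax)` is dominated by a value of the
infimum defining `Hg(x)`, and conversely every value of the latter is attained by the former;
the second direction is only needed to handle Lean's junk value `0` of an unbounded infimum.
Restricted to one block `x_i`, `g` is `f` composed with `y ↦ y/√n + const`, which scales the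
Lipschitz and semiconcavity constants of `f` by `1/√n` and `1/n`.
-/

theorem Real.iInf_le_iInf_of_forall_exists {ι ι' : Sort*} [Nonempty ι'] {f : ι → ℝ}
    {g : ι' → ℝ} (hfg : ∀ i', ∃ i, f i ≤ g i') (hgf : ∀ i, ∃ i', g i' ≤ f i) :
    ⨅ i, f i ≤ ⨅ i', g i' := by
  by_cases hf : BddBelow (Set.range f)
  · exact ciInf_mono_of_forall_exists hf hfg
  have hg : ¬BddBelow (Set.range g) := fun ⟨m, hm⟩ ↦ hf ⟨m, Set.forall_mem_range.2 fun i ↦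
    let ⟨i', hi'⟩ := hgf i
    (hm (Set.mem_range_self i')).trans hi'⟩
  rw [Real.iInf_of_not_bddBelow hf, Real.iInf_of_not_bddBelow hg]

section ScaledSum

variable {E : Type*} [NormedAddCommGroup E] [NormedSpace ℝ E] {n : ℕ}

theorem norm_inv_sqrt_smul_sum_sq_le (w : Fin n → E) :
    ‖(√n)⁻¹ • ∑ i, w i‖ ^ 2 ≤ ∑ i, ‖w i‖ ^ 2 := by
  rcases n.eq_zero_or_pos with rfl | hn
  · simp
  have hsq : (√n)⁻¹ ^ 2 * n = 1 := by
    rw [inv_pow, sq_sqrt n.cast_nonneg, inv_mul_cancel₀ (by positivity)]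
  have cauchy_schwarz : (∑ i, ‖w i‖) ^ 2 ≤ n * ∑ i, ‖w i‖ ^ 2 := by
    simpa using sq_sum_le_card_mul_sum_sq (s := Finset.univ) (f := fun i ↦ ‖w i‖)
  calc ‖(√n)⁻¹ • ∑ i, w i‖ ^ 2 = (√n)⁻¹ ^ 2 * ‖∑ i, w i‖ ^ 2 := by
        rw [norm_smul, norm_inv, norm_of_nonneg (sqrt_nonneg _), mul_pow]
    _ ≤ (√n)⁻¹ ^ 2 * (∑ i, ‖w i‖) ^ 2 := by gcongr; exact norm_sum_le _ _
    _ ≤ (√n)⁻¹ ^ 2 * (n * ∑ i, ‖w i‖ ^ 2) := by gcongr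
    _ = ∑ i, ‖w i‖ ^ 2 := by rw [← mul_assoc, hsq, one_mul]

theorem inv_sqrt_smul_sum_const (hn : n ≠ 0) (y : E) :
    (√n)⁻¹ • ∑ _i : Fin n, (√n)⁻¹ • y = y := by
  have hs : (√n : ℝ) ≠ 0 := by positivity
  rw [Finset.sum_const, Finset.card_fin, ← Nat.cast_smul_eq_nsmul ℝ, smul_smul, smul_smul]
  convert one_smul ℝ y
  field_simp
  exact (sq_sqrt n.cast_nonneg).symm

theorem sum_norm_inv_sqrt_smul_sq (hn : n ≠ 0) (y : E) :
    ∑ _i : Fin n, ‖(√n)⁻¹ • y‖ ^ 2 = ‖y‖ ^ 2 := by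
  rw [Finset.sum_const, Finset.card_fin, nsmul_eq_mul, norm_smul, norm_inv,
    norm_of_nonneg (sqrt_nonneg _), mul_pow, inv_pow, sq_sqrt n.cast_nonneg, ← mul_assoc,
    mul_inv_cancel₀ (by positivity), one_mul]

end ScaledSum

theorem Hconv_inv_sqrt_smul_sum_le_Hn {d n : ℕ} (hn : n ≠ 0) (f : EuclideanSpace ℝ (Fin d) → ℝ)
    (x : Fin n → EuclideanSpace ℝ (Fin d)) :
    Hconv f ((√n)⁻¹ • ∑ i, x i) ≤ Hn (fun z ↦ f ((√n)⁻¹ • ∑ i, z i)) x := by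
  have smul_sum_add (w : Fin n → EuclideanSpace ℝ (Fin d)) :
      (√n)⁻¹ • ∑ i, (x + w) i = (√n)⁻¹ • ∑ i, x i + (√n)⁻¹ • ∑ i, w i := by
    rw [← smul_add, ← Finset.sum_add_distrib]; rfl
  refine Real.iInf_le_iInf_of_forall_exists (fun w ↦ ⟨(√n)⁻¹ • ∑ i, w i, ?_⟩)
    (fun y ↦ ⟨fun _ ↦ (√n)⁻¹ • y, ?_⟩)
  · dsimp only
    rw [smul_sum_add]
    linarith [norm_inv_sqrt_smul_sum_sq_le w]
  · dsimp only
    rw [smul_sum_add, inv_sqrt_smul_sum_const hn, sum_norm_inv_sqrt_smul_sq hn]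

theorem memF.comp_smul_add {E : Type*} [NormedAddCommGroup E] [NormedSpace ℝ E] {C ε c : ℝ}
    {f : E → ℝ} (hf : memF C ε f) (hc : 0 ≤ c) (a : E) :
    memF C (ε * c) fun y ↦ f (c • y + a) := by
  obtain ⟨hlip, hsemi⟩ := hf
  refine ⟨?_, fun y h ↦ ?_⟩
  · have hK : (C * (ε * c)).toNNReal = (C * ε).toNNReal * (1 * ‖c‖₊) := by
      rw [one_mul, ← Real.toNNReal_eq_nnnorm_of_nonneg hc, mul_comm (C * ε).toNNReal,
        ← Real.toNNReal_mul hc]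
      ring_nf
    rw [hK]
    exact hlip.comp ((isometry_add_right a).lipschitz.comp (lipschitzWith_smul c))
  · have shift (s : E) : c • (y + s) + a = c • y + a + c • s := by rw [smul_add]; abel
    calc f (c • (y + h) + a) + f (c • (y - h) + a) - 2 * f (c • y + a)
        = f (c • y + a + c • h) + f (c • y + a - c • h) - 2 * f (c • y + a) := by
          rw [shift, sub_eq_add_neg y, shift, smul_neg, ← sub_eq_add_neg]
      _ ≤ C * ε ^ 2 * ‖c • h‖ ^ 2 := hsemi _ _
      _ = C * (ε * c) ^ 2 * ‖h‖ ^ 2 := by rw [norm_smul, norm_of_nonneg hc]; ring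

theorem avg_substitution_general (d n : ℕ) (hn : 1 ≤ n) (C : ℝ)
    (f : EuclideanSpace ℝ (Fin d) → ℝ) :
    (∀ x : Fin n → EuclideanSpace ℝ (Fin d),
        Hconv f ((Real.sqrt n)⁻¹ • ∑ i, x i) ≤
          Hn (fun z => f ((Real.sqrt n)⁻¹ • ∑ i, z i)) x) ∧
      ((∀ z, f (-z) = f z) → memF C 1 f →
        (∀ x : Fin n → EuclideanSpace ℝ (Fin d),
            f ((Real.sqrt n)⁻¹ • ∑ i, (-x) i) = f ((Real.sqrt n)⁻¹ • ∑ i, x i)) ∧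
          memFn (n := n) C (Real.sqrt n)⁻¹
            (fun z => f ((Real.sqrt n)⁻¹ • ∑ i, z i))) := by
  refine ⟨Hconv_inv_sqrt_smul_sum_le_Hn (by omega) f, fun heven hf ↦ ⟨fun x ↦ ?_, fun i x ↦ ?_⟩⟩
  · simp only [Pi.neg_apply, Finset.sum_neg_distrib, smul_neg, heven]
  · have hblock : (fun y ↦ f ((√n)⁻¹ • ∑ j, Function.update x i y j)) =
        fun y ↦ f ((√n)⁻¹ • y + (√n)⁻¹ • ∑ j ∈ Finset.univ \ {i}, x j) := by
      ext y
      rw [Finset.sum_update_of_mem (Finset.mem_univ i), smul_add]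
    simpa only [hblock, one_mul] using hf.comp_smul_add (inv_nonneg.2 (sqrt_nonneg n)) _

/-- If `g(x₁,…,x_n) = f((x₁+⋯+x_n)/√n)`, then `Hg(x₁,…,x_n) ≥ Hf((x₁+⋯+x_n)/√n)`;
moreover, if `f` is even and belongs to `F(C,1)` then `g` is even and belongs to
`F_n(C, 1/√n)`. -/
theorem avg_substitution (d n : ℕ) (hn : 1 ≤ n) (C : ℝ) (hC : 0 < C)
    (f : EuclideanSpace ℝ (Fin d) → ℝ) :
    (∀ x : Fin n → EuclideanSpace ℝ (Fin d),
        Hconv f ((Real.sqrt n)⁻¹ • ∑ i, x i) ≤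
          Hn (fun z => f ((Real.sqrt n)⁻¹ • ∑ i, z i)) x) ∧
      ((∀ z, f (-z) = f z) → memF C 1 f →
        (∀ x : Fin n → EuclideanSpace ℝ (Fin d),
            f ((Real.sqrt n)⁻¹ • ∑ i, (-x) i) = f ((Real.sqrt n)⁻¹ • ∑ i, x i)) ∧
          memFn (n := n) C (Real.sqrt n)⁻¹
            (fun z => f ((Real.sqrt n)⁻¹ • ∑ i, z i))) :=
  avg_substitution_general d n hn C f
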